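/- Let q = 2p be even with p ≥ 2, λ = 2·cos(π/q), and α ∈ (1/2, 1/λ). Then for every (t,v) ∈ Ω_α with t ≥ 0 one has min{ v/(1+tv), t/(1+tv) } < 1/2; consequently D ∩ {(t,v) : t ≥ 0} = ∅. -/

import Mathlib

/-- The digit `d(x) = ⌊|1/(λx)| + 1 - α⌋` of the α-Rosen continued fraction. -/
noncomputable def rosenD (lam α x : ℝ) : ℤ := ⌊|1 / (lam * x)| + 1 - α⌋

/-- The α-Rosen continued fraction map `T_α` on `[(α-1)λ, αλ)`. -/
noncomputable def rosenT (lam α x : ℝ) : ℝ :=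
  if x = 0 then 0 else Real.sign x / x - lam * (rosenD lam α x : ℝ)

/-- `x` is `G_q`-irrational: the orbit of `x` under `T_α` never hits `0`. -/
def GIrrational (lam α x : ℝ) : Prop := ∀ n : ℕ, (rosenT lam α)^[n] x ≠ 0

/-- The recursion `u_n = d_n(x)·λ·u_{n-1} + ε_n(x)·u_{n-2}` for the numerators and
denominators of the α-Rosen convergents, with the index shifted by one:
`rosenPQ lam α x a b n = u_{n-1}` where `u_{-1} = a`, `u_0 = b`. -/
noncomputable def rosenPQ (lam α x a b : ℝ) : ℕ → ℝ
  | 0 => a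
  | 1 => b
  | n + 2 =>
      (rosenD lam α ((rosenT lam α)^[n] x) : ℝ) * lam * rosenPQ lam α x a b (n + 1)
        + Real.sign ((rosenT lam α)^[n] x) * rosenPQ lam α x a b n

/-- The approximation coefficient `Θ_n(x) = q_n² · |x - p_n/q_n|` of the α-Rosen
expansion of `x` (with `p_{-1}=1, q_{-1}=0, p_0=0, q_0=1`). -/
noncomputable def rosenTheta (lam α x : ℝ) (n : ℕ) : ℝ :=
  (rosenPQ lam α x 0 1 (n + 1)) ^ 2 *
    |x - rosenPQ lam α x 1 0 (n + 1) / rosenPQ lam α x 0 1 (n + 1)|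

/-- The natural extension map `𝒯_α(t,v) = (T_α(t), 1/(d(t)λ + ε(t)v))`. -/
noncomputable def rosenNE (lam α : ℝ) (tv : ℝ × ℝ) : ℝ × ℝ :=
  (rosenT lam α tv.1, 1 / ((rosenD lam α tv.1 : ℝ) * lam + Real.sign tv.1 * tv.2))

/-- `l_n = T_α^n((α-1)λ)`, the orbit of the left endpoint. -/
noncomputable def lseq (lam α : ℝ) (n : ℕ) : ℝ := (rosenT lam α)^[n] ((α - 1) * lam)

/-- `r_n = T_α^n(αλ)`, the orbit of the right endpoint. -/
noncomputable def rseq (lam α : ℝ) (n : ℕ) : ℝ := (rosenT lam α)^[n] (α * lam)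

/-- The heights `H_1 = 1/(λ+1)`, `H_2 = 1/λ`, `H_n = 1/(λ - H_{n-2})` of the
natural extension domain. -/
noncomputable def Hs (lam : ℝ) : ℕ → ℝ
  | 0 => 0
  | 1 => 1 / (lam + 1)
  | 2 => 1 / lam
  | n + 3 => 1 / (lam - Hs lam (n + 1))

/-- The natural extension domain `Ω_α = ⋃_{n=1}^{2p-1} J_n × [0, H_n]` for even
`q = 2p` and `α ∈ (1/2, 1/λ)`, where `J_{2n-1} = [l_{n-1}, r_n)`,
`J_{2n} = [r_n, l_n)` and `J_{2p-1} = [l_{p-1}, r_0)`. -/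
noncomputable def OmegaEven (lam α : ℝ) (p : ℕ) : Set (ℝ × ℝ) :=
  (⋃ n ∈ Finset.Icc 1 (p - 1),
      Set.Ico (lseq lam α (n - 1)) (rseq lam α n) ×ˢ
        Set.Icc (0 : ℝ) (Hs lam (2 * n - 1))) ∪
    (⋃ n ∈ Finset.Icc 1 (p - 1),
      Set.Ico (rseq lam α n) (lseq lam α n) ×ˢ Set.Icc (0 : ℝ) (Hs lam (2 * n))) ∪
    Set.Ico (lseq lam α (p - 1)) (rseq lam α 0) ×ˢ
      Set.Icc (0 : ℝ) (Hs lam (2 * p - 1))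

/-- The region `D ⊆ Ω_α` where `min{Θ_{n-1}, Θ_n} > ℋ_q = 1/2` (even `q`). -/
noncomputable def DEven (lam α : ℝ) (p : ℕ) : Set (ℝ × ℝ) :=
  {tv ∈ OmegaEven lam α p |
    1 / 2 < tv.2 / (1 + tv.1 * tv.2) ∧ 1 / 2 < |tv.1| / (1 + tv.1 * tv.2)}

lemma min_lt_half (t v : ℝ) (ht0 : 0 ≤ t) (ht1 : t < 1) (hv0 : 0 ≤ v) (hv1 : v ≤ 1) :
    min (v / (1 + t * v)) (t / (1 + t * v)) < 1 / 2 := by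
  have hden : 0 < 1 + t * v := by nlinarith
  by_contra h
  push_neg at h
  have h1 := le_trans h (min_le_left (v / (1 + t * v)) (t / (1 + t * v)))
  have h2 := le_trans h (min_le_right (v / (1 + t * v)) (t / (1 + t * v)))
  rw [le_div_iff₀ hden] at h1 h2
  nlinarith [mul_nonneg (sub_pos.2 ht1).le (sub_nonneg.2 hv1), sq_nonneg (t - v)]

lemma rosenT_lt (lam α : ℝ) (hlam : 0 < lam) (hα : 0 < α) (x : ℝ) :
    rosenT lam α x < α * lam := by
  unfold rosenT
  split_ifs with h
  · positivity
  · have hx : 0 < |x| := abs_pos.2 h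
    have hsign : Real.sign x / x = 1 / |x| := by
      rcases lt_or_gt_of_ne h with hx' | hx'
      · rw [Real.sign_of_neg hx', abs_of_neg hx']; field_simp
      · rw [Real.sign_of_pos hx', abs_of_pos hx']
    have habs : |1 / (lam * x)| = (1 / |x|) / lam := by
      rw [abs_div, abs_mul, abs_of_pos hlam, abs_one]; ring
    have hd : (1 / |x|) / lam - α < (rosenD lam α x : ℝ) := by
      unfold rosenD
      rw [habs]
      have := Int.sub_one_lt_floor ((1 / |x|) / lam + 1 - α)
      linarith
    rw [hsign]
    have h2 : lam * ((1 / |x|) / lam - α) < lam * (rosenD lam α x : ℝ) :=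
      mul_lt_mul_of_pos_left hd hlam
    have h3 : lam * ((1 / |x|) / lam) = 1 / |x| := by field_simp
    nlinarith [h2, h3]

lemma sin_theta_pos (p : ℕ) (hp : 2 ≤ p) (θ : ℝ) (hθ : θ = Real.pi / (2 * p))
    (k : ℕ) (hk : 1 ≤ k) (hk2 : k ≤ p + 1) : 0 < Real.sin (k * θ) := by
  have hpi := Real.pi_pos
  have hp0 : (0:ℝ) < p := by positivity
  have hθpos : 0 < θ := by rw [hθ]; positivity
  have hθ4 : θ ≤ Real.pi / 4 := by
    rw [hθ, div_le_div_iff₀ (by positivity) (by norm_num)]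
    have : (2:ℝ) ≤ (p:ℝ) := by exact_mod_cast hp
    nlinarith
  apply Real.sin_pos_of_pos_of_lt_pi
  · have : (1:ℝ) ≤ (k:ℝ) := by exact_mod_cast hk
    nlinarith
  · have hkp : (k:ℝ) ≤ (p:ℝ) + 1 := by exact_mod_cast hk2
    have h1 : (k:ℝ) * θ ≤ ((p:ℝ) + 1) * θ := by nlinarith
    have h2 : ((p:ℝ) + 1) * θ = Real.pi / 2 + θ := by
      rw [hθ]; field_simp
    nlinarith

lemma sin_rec (θ a : ℝ) :
    Real.sin (a + θ) + Real.sin (a - θ) = 2 * Real.cos θ * Real.sin a := by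
  rw [Real.sin_add, Real.sin_sub]; ring

lemma cos_theta_pos (p : ℕ) (hp : 2 ≤ p) (θ : ℝ) (hθ : θ = Real.pi / (2 * p)) :
    0 < Real.cos θ := by
  have hpi := Real.pi_pos
  have hp0 : (0:ℝ) < p := by positivity
  apply Real.cos_pos_of_mem_Ioo
  constructor
  · have : 0 < θ := by rw [hθ]; positivity
    linarith
  · have h2 : (2:ℝ) ≤ (p:ℝ) := by exact_mod_cast hp
    rw [hθ, div_lt_div_iff₀ (by positivity) (by norm_num)]
    nlinarith

lemma Hs_even_eq (p : ℕ) (hp : 2 ≤ p) (lam θ : ℝ) (hθ : θ = Real.pi / (2 * p))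
    (hlam : lam = 2 * Real.cos θ) :
    ∀ m : ℕ, m + 2 ≤ p →
      Hs lam (2 * m + 2) = Real.sin (((m:ℝ) + 1) * θ) / Real.sin (((m:ℝ) + 2) * θ) := by
  intro m
  induction m with
  | zero =>
    intro _
    have h1 : 0 < Real.sin θ := by
      have := sin_theta_pos p hp θ hθ 1 le_rfl (by omega); simpa using this
    have hc := cos_theta_pos p hp θ hθ
    show 1 / lam = _
    rw [hlam, show (((0:ℕ):ℝ) + 2) * θ = 2 * θ by push_cast; ring,
      show (((0:ℕ):ℝ) + 1) * θ = θ by push_cast; ring, Real.sin_two_mul,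
      div_eq_div_iff (by positivity) (by positivity)]
    ring
  | succ m ih =>
    intro hm
    have ih' := ih (by omega)
    have hs2 : 0 < Real.sin (((m:ℝ) + 2) * θ) := by
      have := sin_theta_pos p hp θ hθ (m + 2) (by omega) (by omega)
      convert this using 2; push_cast; ring
    have hs3 : 0 < Real.sin (((m:ℝ) + 3) * θ) := by
      have := sin_theta_pos p hp θ hθ (m + 3) (by omega) (by omega)
      convert this using 2; push_cast; ring
    have hrec : Real.sin (((m:ℝ) + 3) * θ) + Real.sin (((m:ℝ) + 1) * θ)
        = 2 * Real.cos θ * Real.sin (((m:ℝ) + 2) * θ) := by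
      have := sin_rec θ (((m : ℝ) + 2) * θ)
      rw [show ((m:ℝ) + 2) * θ + θ = ((m:ℝ) + 3) * θ by ring,
        show ((m:ℝ) + 2) * θ - θ = ((m:ℝ) + 1) * θ by ring] at this
      exact this
    have hstep : Hs lam (2 * (m + 1) + 2) = 1 / (lam - Hs lam (2 * m + 2)) := by
      show Hs lam (2 * m + 1 + 3) = _
      rw [Hs]
    have hden : 0 < lam - Hs lam (2 * m + 2) := by
      rw [ih', hlam, sub_pos, div_lt_iff₀ hs2]
      nlinarith
    rw [hstep, ih',
      show (((m+1:ℕ):ℝ) + 1) * θ = ((m:ℝ) + 2) * θ by push_cast; ring,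
      show (((m+1:ℕ):ℝ) + 2) * θ = ((m:ℝ) + 3) * θ by push_cast; ring]
    rw [ih', hlam] at hden
    rw [hlam, div_eq_div_iff (by linarith) hs3.ne']
    rw [mul_sub, mul_div_assoc', mul_div_cancel_left₀ _ hs2.ne']
    nlinarith [hrec, hs2, hs3, mul_pos hs2 hs2]

lemma Hs_odd_eq (p : ℕ) (hp : 2 ≤ p) (lam θ : ℝ) (hθ : θ = Real.pi / (2 * p))
    (hlam : lam = 2 * Real.cos θ) :
    ∀ m : ℕ, m + 1 ≤ p →
      Hs lam (2 * m + 1) = (Real.sin ((m:ℝ) * θ) + Real.sin (((m:ℝ) + 1) * θ)) /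
        (Real.sin (((m:ℝ) + 1) * θ) + Real.sin (((m:ℝ) + 2) * θ)) := by
  intro m
  induction m with
  | zero =>
    intro _
    have h1 : 0 < Real.sin θ := by
      have := sin_theta_pos p hp θ hθ 1 le_rfl (by omega); simpa using this
    have hc := cos_theta_pos p hp θ hθ
    show 1 / (lam + 1) = _
    rw [show (((0:ℕ):ℝ)) * θ = 0 by push_cast; ring,
      show (((0:ℕ):ℝ) + 1) * θ = θ by push_cast; ring,
      show (((0:ℕ):ℝ) + 2) * θ = 2 * θ by push_cast; ring,
      Real.sin_zero, Real.sin_two_mul, hlam,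
      div_eq_div_iff (by positivity) (by positivity)]
    ring
  | succ m ih =>
    intro hm
    have ih' := ih (by omega)
    have hs1 : 0 < Real.sin (((m:ℝ) + 1) * θ) := by
      have := sin_theta_pos p hp θ hθ (m + 1) (by omega) (by omega)
      convert this using 2; push_cast; ring
    have hs2 : 0 < Real.sin (((m:ℝ) + 2) * θ) := by
      have := sin_theta_pos p hp θ hθ (m + 2) (by omega) (by omega)
      convert this using 2; push_cast; ring
    have hs3 : 0 < Real.sin (((m:ℝ) + 3) * θ) := by
      have := sin_theta_pos p hp θ hθ (m + 3) (by omega) (by omega)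
      convert this using 2; push_cast; ring
    have hrec1 : Real.sin (((m:ℝ) + 2) * θ) + Real.sin ((m:ℝ) * θ)
        = 2 * Real.cos θ * Real.sin (((m:ℝ) + 1) * θ) := by
      have := sin_rec θ (((m : ℝ) + 1) * θ)
      rw [show ((m:ℝ) + 1) * θ + θ = ((m:ℝ) + 2) * θ by ring,
        show ((m:ℝ) + 1) * θ - θ = (m:ℝ) * θ by ring] at this
      exact this
    have hrec2 : Real.sin (((m:ℝ) + 3) * θ) + Real.sin (((m:ℝ) + 1) * θ)
        = 2 * Real.cos θ * Real.sin (((m:ℝ) + 2) * θ) := by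
      have := sin_rec θ (((m : ℝ) + 2) * θ)
      rw [show ((m:ℝ) + 2) * θ + θ = ((m:ℝ) + 3) * θ by ring,
        show ((m:ℝ) + 2) * θ - θ = ((m:ℝ) + 1) * θ by ring] at this
      exact this
    have hd12 : 0 < Real.sin (((m:ℝ) + 1) * θ) + Real.sin (((m:ℝ) + 2) * θ) := by
      positivity
    have hstep : Hs lam (2 * (m + 1) + 1) = 1 / (lam - Hs lam (2 * m + 1)) := by
      show Hs lam (2 * m + 3) = _
      rw [Hs]
    have key : lam - (Real.sin ((m:ℝ) * θ) + Real.sin (((m:ℝ) + 1) * θ)) /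
        (Real.sin (((m:ℝ) + 1) * θ) + Real.sin (((m:ℝ) + 2) * θ))
        = (Real.sin (((m:ℝ) + 2) * θ) + Real.sin (((m:ℝ) + 3) * θ)) /
          (Real.sin (((m:ℝ) + 1) * θ) + Real.sin (((m:ℝ) + 2) * θ)) := by
      rw [eq_div_iff hd12.ne', sub_mul, div_mul_cancel₀ _ hd12.ne', hlam]
      linarith [hrec1, hrec2]
    rw [hstep, ih', key, one_div_div,
      show (((m+1:ℕ):ℝ)) * θ = ((m:ℝ) + 1) * θ by push_cast; ring,
      show (((m+1:ℕ):ℝ) + 1) * θ = ((m:ℝ) + 2) * θ by push_cast; ring,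
      show (((m+1:ℕ):ℝ) + 2) * θ = ((m:ℝ) + 3) * θ by push_cast; ring]

lemma sin_rec2 (θ a : ℝ) :
    Real.sin (a + θ) - Real.sin (a - θ) = 2 * Real.sin θ * Real.cos a := by
  rw [Real.sin_add, Real.sin_sub]; ring

lemma pθ (p : ℕ) (hp : 2 ≤ p) (θ : ℝ) (hθ : θ = Real.pi / (2 * p)) :
    (p : ℝ) * θ = Real.pi / 2 := by
  have hp0 : (p:ℝ) ≠ 0 := by positivity
  rw [hθ]; field_simp


lemma Hs_odd_le_one (p : ℕ) (hp : 2 ≤ p) (lam θ : ℝ) (hθ : θ = Real.pi / (2 * p))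
    (hlam : lam = 2 * Real.cos θ) (m : ℕ) (hm : m + 1 ≤ p) :
    Hs lam (2 * m + 1) ≤ 1 := by
  have hθpos : 0 < θ := by
    have := Real.pi_pos; rw [hθ]; positivity
  have hs0 : 0 ≤ Real.sin ((m:ℝ) * θ) := by
    apply Real.sin_nonneg_of_nonneg_of_le_pi
    · positivity
    · have h1 : (m:ℝ) * θ ≤ (p:ℝ) * θ := by
        have : (m:ℝ) ≤ (p:ℝ) := by exact_mod_cast (by omega : m ≤ p)
        nlinarith
      rw [pθ p hp θ hθ] at h1
      linarith [Real.pi_pos]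
  have hs1 : 0 < Real.sin (((m:ℝ) + 1) * θ) := by
    have := sin_theta_pos p hp θ hθ (m + 1) (by omega) (by omega)
    convert this using 2; push_cast; ring
  have hs2 : 0 < Real.sin (((m:ℝ) + 2) * θ) := by
    have := sin_theta_pos p hp θ hθ (m + 2) (by omega) (by omega)
    convert this using 2; push_cast; ring
  have hcos : 0 ≤ Real.cos (((m:ℝ) + 1) * θ) := by
    apply Real.cos_nonneg_of_mem_Icc
    constructor
    · have : 0 ≤ ((m:ℝ) + 1) * θ := by positivity
      linarith [Real.pi_pos]
    · have h1 : ((m:ℝ) + 1) * θ ≤ (p:ℝ) * θ := by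
        have : (m:ℝ) + 1 ≤ (p:ℝ) := by exact_mod_cast hm
        nlinarith
      rw [pθ p hp θ hθ] at h1
      exact h1
  have hmono : Real.sin ((m:ℝ) * θ) ≤ Real.sin (((m:ℝ) + 2) * θ) := by
    have := sin_rec2 θ (((m:ℝ) + 1) * θ)
    rw [show ((m:ℝ) + 1) * θ + θ = ((m:ℝ) + 2) * θ by ring,
      show ((m:ℝ) + 1) * θ - θ = (m:ℝ) * θ by ring] at this
    have hθpi : θ < Real.pi := by
      have hp2 : (2:ℝ) ≤ (p:ℝ) := by exact_mod_cast hp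
      rw [hθ, div_lt_iff₀ (by positivity)]
      nlinarith [Real.pi_pos]
    nlinarith [Real.sin_pos_of_pos_of_lt_pi hθpos hθpi]
  rw [Hs_odd_eq p hp lam θ hθ hlam m hm, div_le_one (by positivity)]
  linarith

lemma Hs_even_le_one (p : ℕ) (hp : 2 ≤ p) (lam θ : ℝ) (hθ : θ = Real.pi / (2 * p))
    (hlam : lam = 2 * Real.cos θ) (m : ℕ) (hm : m + 2 ≤ p) :
    Hs lam (2 * m + 2) ≤ 1 := by
  have hθpos : 0 < θ := by
    have := Real.pi_pos; rw [hθ]; positivity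
  have hs2 : 0 < Real.sin (((m:ℝ) + 2) * θ) := by
    have := sin_theta_pos p hp θ hθ (m + 2) (by omega) (by omega)
    convert this using 2; push_cast; ring
  have hmono : Real.sin (((m:ℝ) + 1) * θ) ≤ Real.sin (((m:ℝ) + 2) * θ) := by
    have hub : ((m:ℝ) + 2) * θ ≤ Real.pi / 2 := by
      rw [← pθ p hp θ hθ]
      have : (m:ℝ) + 2 ≤ (p:ℝ) := by exact_mod_cast hm
      nlinarith
    apply Real.strictMonoOn_sin.monotoneOn
    · constructor
      · have : 0 ≤ ((m:ℝ) + 1) * θ := by positivity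
        linarith [Real.pi_pos]
      · nlinarith
    · constructor
      · have : 0 ≤ ((m:ℝ) + 2) * θ := by positivity
        linarith [Real.pi_pos]
      · exact hub
    · nlinarith
  rw [Hs_even_eq p hp lam θ hθ hlam m hm, div_le_one hs2]
  linarith

lemma rseq_succ (lam α : ℝ) (m : ℕ) :
    rseq lam α (m + 1) = rosenT lam α (rseq lam α m) := by
  unfold rseq; rw [Function.iterate_succ_apply']

lemma lseq_succ (lam α : ℝ) (m : ℕ) :
    lseq lam α (m + 1) = rosenT lam α (lseq lam α m) := by
  unfold lseq; rw [Function.iterate_succ_apply']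

/-- For even `q = 2p` and `α ∈ (1/2, 1/λ)`, every point `(t,v) ∈ Ω_α` with `t ≥ 0`
satisfies `min{v/(1+tv), t/(1+tv)} < 1/2`; consequently `D` contains no point with
`t ≥ 0`. -/
theorem D_empty_on_nonneg (p : ℕ) (hp : 2 ≤ p) (lam : ℝ)
    (hlam : lam = 2 * Real.cos (Real.pi / (2 * (p : ℝ))))
    (α : ℝ) (hα : α ∈ Set.Ioo (1 / 2 : ℝ) (1 / lam)) :
    (∀ t v : ℝ, (t, v) ∈ OmegaEven lam α p → 0 ≤ t →
      min (v / (1 + t * v)) (t / (1 + t * v)) < 1 / 2) ∧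
    DEven lam α p ∩ {tv : ℝ × ℝ | 0 ≤ tv.1} = ∅ := by
  obtain ⟨hα1, hα2⟩ := hα
  set θ := Real.pi / (2 * (p : ℝ)) with hθdef
  have hθ : θ = Real.pi / (2 * p) := hθdef
  have hc := cos_theta_pos p hp θ hθ
  have hlam0 : 0 < lam := by rw [hlam]; linarith
  have hα0 : 0 < α := by linarith
  have hal1 : α * lam < 1 := by
    rw [lt_div_iff₀ hlam0] at hα2; linarith
  have main : ∀ t v : ℝ, (t, v) ∈ OmegaEven lam α p → 0 ≤ t →
      min (v / (1 + t * v)) (t / (1 + t * v)) < 1 / 2 := by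
    intro t v hm ht
    have hkey : t < 1 ∧ 0 ≤ v ∧ v ≤ 1 := by
      rcases hm with (h | h) | h
      · simp only [Set.mem_iUnion] at h
        obtain ⟨n, hn, hmem⟩ := h
        rw [Finset.mem_Icc] at hn
        simp only [Set.mem_prod, Set.mem_Ico, Set.mem_Icc] at hmem
        obtain ⟨⟨_, htb⟩, hv0, hvH⟩ := hmem
        obtain ⟨m, rfl⟩ : ∃ m, n = m + 1 := ⟨n - 1, by omega⟩
        refine ⟨?_, hv0, ?_⟩
        · calc t < rseq lam α (m + 1) := htb
            _ = rosenT lam α (rseq lam α m) := rseq_succ ..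
            _ < α * lam := rosenT_lt lam α hlam0 hα0 _
            _ < 1 := hal1
        · rw [show 2 * (m + 1) - 1 = 2 * m + 1 by omega] at hvH
          exact hvH.trans (Hs_odd_le_one p hp lam θ hθ hlam m (by omega))
      · simp only [Set.mem_iUnion] at h
        obtain ⟨n, hn, hmem⟩ := h
        rw [Finset.mem_Icc] at hn
        simp only [Set.mem_prod, Set.mem_Ico, Set.mem_Icc] at hmem
        obtain ⟨⟨_, htb⟩, hv0, hvH⟩ := hmem
        obtain ⟨m, rfl⟩ : ∃ m, n = m + 1 := ⟨n - 1, by omega⟩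
        refine ⟨?_, hv0, ?_⟩
        · calc t < lseq lam α (m + 1) := htb
            _ = rosenT lam α (lseq lam α m) := lseq_succ ..
            _ < α * lam := rosenT_lt lam α hlam0 hα0 _
            _ < 1 := hal1
        · rw [show 2 * (m + 1) = 2 * m + 2 by omega] at hvH
          exact hvH.trans (Hs_even_le_one p hp lam θ hθ hlam m (by omega))
      · simp only [Set.mem_prod, Set.mem_Ico, Set.mem_Icc] at h
        obtain ⟨⟨_, htb⟩, hv0, hvH⟩ := h
        refine ⟨?_, hv0, ?_⟩
        · have hr0 : rseq lam α 0 = α * lam := rfl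
          rw [hr0] at htb
          linarith
        · rw [show 2 * p - 1 = 2 * (p - 1) + 1 by omega] at hvH
          exact hvH.trans (Hs_odd_le_one p hp lam θ hθ hlam (p - 1) (by omega))
    exact min_lt_half t v ht hkey.1 hkey.2.1 hkey.2.2
  refine ⟨main, ?_⟩
  ext tv
  simp only [Set.mem_inter_iff, Set.mem_empty_iff_false, iff_false, Set.mem_setOf_eq,
    DEven, Set.mem_sep_iff, not_and]
  rintro ⟨hΩ, h1, h2⟩ ht
  have hmm := main tv.1 tv.2 (by simpa using hΩ) ht
  rw [abs_of_nonneg ht] at h2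
  rcases min_lt_iff.1 hmm with h | h <;> linarith
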